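/- For every a > 0 and every ε > 0 there exists a symplectic embedding of the interior of the trapezoid T^{2n+2}(a) into the ball B^{2n+2}(a+ε) ⊂ ℝ^{2n+2}. -/

import Mathlib

open Set

noncomputable section

/-- `ℝ^{2m}`, written as pairs consisting of the `m` x-coordinates and the `m`
y-coordinates; for `m = n+1` the last pair of coordinates is the `(u,v)`-plane. -/
abbrev Esp (m : ℕ) : Type := (Fin m → ℝ) × (Fin m → ℝ)

/-- The standard symplectic form `ω₀ = Σ dxᵢ ∧ dyᵢ` (which is `ω₀ ⊕ du∧dv` on
`ℝ^{2n} × ℝ²`). -/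
def omega0 {m : ℕ} (v w : Esp m) : ℝ := ∑ i, (v.1 i * w.2 i - v.2 i * w.1 i)

/-- `f` is a symplectic embedding on the set `A`. -/
def IsSymplecticEmbeddingOn {m : ℕ} (f : Esp m → Esp m) (A : Set (Esp m)) : Prop :=
  Set.InjOn f A ∧ ∀ p ∈ A, DifferentiableAt ℝ f p ∧
    ∀ v w, omega0 (fderiv ℝ f p v) (fderiv ℝ f p w) = omega0 v w

/-- The open round ball in `ℝ^{2m}` of capacity `a` (radius `√(a/π)`), centered at `0`. -/
def openBallCap (m : ℕ) (a : ℝ) : Set (Esp m) :=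
  {p | Real.pi * (∑ i, ((p.1 i)^2 + (p.2 i)^2)) < a}

/-- The closed round ball in `ℝ^{2m}` of capacity `a` (radius `√(a/π)`), centered at `0`. -/
def closedBallCap (m : ℕ) (a : ℝ) : Set (Esp m) :=
  {p | Real.pi * (∑ i, ((p.1 i)^2 + (p.2 i)^2)) ≤ a}

/-- The trapezoid `T^{2n+2}(a) = {(x,u,v) : 0 ≤ u ≤ a, 0 ≤ v ≤ 1, x ∈ B^{2n}(a-u)}`,
where `u = p.1 (Fin.last n)` and `v = p.2 (Fin.last n)`. -/
def trapezoid (n : ℕ) (a : ℝ) : Set (Esp (n+1)) :=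
  {p | p.1 (Fin.last n) ∈ Icc (0:ℝ) a ∧ p.2 (Fin.last n) ∈ Icc (0:ℝ) 1 ∧
       Real.pi * (∑ i : Fin n, ((p.1 i.castSucc)^2 + (p.2 i.castSucc)^2))
         ≤ a - p.1 (Fin.last n)}

namespace S13

variable {n : ℕ}

/-- Projection onto the `u`-coordinate. -/
def U (n : ℕ) : Esp (n+1) →L[ℝ] ℝ :=
  (ContinuousLinearMap.proj (Fin.last n)).comp
    (ContinuousLinearMap.fst ℝ (Fin (n+1) → ℝ) (Fin (n+1) → ℝ))

/-- Projection onto the `v`-coordinate. -/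
def V (n : ℕ) : Esp (n+1) →L[ℝ] ℝ :=
  (ContinuousLinearMap.proj (Fin.last n)).comp
    (ContinuousLinearMap.snd ℝ (Fin (n+1) → ℝ) (Fin (n+1) → ℝ))

/-- The symplectic folding map: identity on the first `2n` coordinates, and on the
`(u,v)`-plane the area preserving map `(u,v) ↦ (√((u+ε)/π) cos 2πv, √((u+ε)/π) sin 2πv)`. -/
def F (n : ℕ) (ε : ℝ) (p : Esp (n+1)) : Esp (n+1) :=
  (fun i => if i = Fin.last n then
      Real.sqrt ((p.1 (Fin.last n) + ε) * Real.pi⁻¹) * Real.cos (2 * Real.pi * p.2 (Fin.last n))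
    else p.1 i,
   fun i => if i = Fin.last n then
      Real.sqrt ((p.1 (Fin.last n) + ε) * Real.pi⁻¹) * Real.sin (2 * Real.pi * p.2 (Fin.last n))
    else p.2 i)

lemma F_fst_last (ε : ℝ) (p : Esp (n+1)) :
    (F n ε p).1 (Fin.last n) = Real.sqrt ((p.1 (Fin.last n) + ε) * Real.pi⁻¹) *
      Real.cos (2 * Real.pi * p.2 (Fin.last n)) := by simp [F]

lemma F_snd_last (ε : ℝ) (p : Esp (n+1)) :
    (F n ε p).2 (Fin.last n) = Real.sqrt ((p.1 (Fin.last n) + ε) * Real.pi⁻¹) *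
      Real.sin (2 * Real.pi * p.2 (Fin.last n)) := by simp [F]

lemma F_fst_ne (ε : ℝ) (p : Esp (n+1)) {i : Fin (n+1)} (hi : i ≠ Fin.last n) :
    (F n ε p).1 i = p.1 i := by simp [F, hi]

lemma F_snd_ne (ε : ℝ) (p : Esp (n+1)) {i : Fin (n+1)} (hi : i ≠ Fin.last n) :
    (F n ε p).2 i = p.2 i := by simp [F, hi]

/-- The derivative of the first new coordinate. -/
def XD (n : ℕ) (ε : ℝ) (p : Esp (n+1)) : Esp (n+1) →L[ℝ] ℝ :=
  Real.sqrt ((p.1 (Fin.last n) + ε) * Real.pi⁻¹) •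
      ((-Real.sin (2 * Real.pi * p.2 (Fin.last n))) • ((2 * Real.pi) • V n)) +
    Real.cos (2 * Real.pi * p.2 (Fin.last n)) •
      ((1 / (2 * Real.sqrt ((p.1 (Fin.last n) + ε) * Real.pi⁻¹))) • (Real.pi⁻¹ • U n))

/-- The derivative of the second new coordinate. -/
def YD (n : ℕ) (ε : ℝ) (p : Esp (n+1)) : Esp (n+1) →L[ℝ] ℝ :=
  Real.sqrt ((p.1 (Fin.last n) + ε) * Real.pi⁻¹) •
      ((Real.cos (2 * Real.pi * p.2 (Fin.last n))) • ((2 * Real.pi) • V n)) +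
    Real.sin (2 * Real.pi * p.2 (Fin.last n)) •
      ((1 / (2 * Real.sqrt ((p.1 (Fin.last n) + ε) * Real.pi⁻¹))) • (Real.pi⁻¹ • U n))

def Phi1 (n : ℕ) (ε : ℝ) (p : Esp (n+1)) : Fin (n+1) → (Esp (n+1) →L[ℝ] ℝ) :=
  fun i => if i = Fin.last n then XD n ε p
    else (ContinuousLinearMap.proj i).comp
      (ContinuousLinearMap.fst ℝ (Fin (n+1) → ℝ) (Fin (n+1) → ℝ))

def Phi2 (n : ℕ) (ε : ℝ) (p : Esp (n+1)) : Fin (n+1) → (Esp (n+1) →L[ℝ] ℝ) :=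
  fun i => if i = Fin.last n then YD n ε p
    else (ContinuousLinearMap.proj i).comp
      (ContinuousLinearMap.snd ℝ (Fin (n+1) → ℝ) (Fin (n+1) → ℝ))

/-- The full derivative of `F`. -/
def L (n : ℕ) (ε : ℝ) (p : Esp (n+1)) : Esp (n+1) →L[ℝ] Esp (n+1) :=
  (ContinuousLinearMap.pi (Phi1 n ε p)).prod (ContinuousLinearMap.pi (Phi2 n ε p))

theorem hasF (ε : ℝ) (p : Esp (n+1)) (hp : 0 < p.1 (Fin.last n) + ε) :
    HasFDerivAt (F n ε) (L n ε p) p := by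
  have hspos : 0 < (p.1 (Fin.last n) + ε) * Real.pi⁻¹ :=
    mul_pos hp (inv_pos.2 Real.pi_pos)
  have hu : HasFDerivAt (fun q : Esp (n+1) => q.1 (Fin.last n)) (U n) p := (U n).hasFDerivAt
  have hv : HasFDerivAt (fun q : Esp (n+1) => q.2 (Fin.last n)) (V n) p := (V n).hasFDerivAt
  have hs : HasFDerivAt (fun q : Esp (n+1) => (q.1 (Fin.last n) + ε) * Real.pi⁻¹)
      (Real.pi⁻¹ • U n) p := (hu.add_const ε).mul_const _
  have hr := hs.sqrt (ne_of_gt hspos)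
  have hθ : HasFDerivAt (fun q : Esp (n+1) => 2 * Real.pi * q.2 (Fin.last n))
      ((2 * Real.pi) • V n) p := hv.const_mul _
  have hX : HasFDerivAt
      (fun q : Esp (n+1) => Real.sqrt ((q.1 (Fin.last n) + ε) * Real.pi⁻¹) *
        Real.cos (2 * Real.pi * q.2 (Fin.last n))) (XD n ε p) p := hr.mul hθ.cos
  have hY : HasFDerivAt
      (fun q : Esp (n+1) => Real.sqrt ((q.1 (Fin.last n) + ε) * Real.pi⁻¹) *
        Real.sin (2 * Real.pi * q.2 (Fin.last n))) (YD n ε p) p := hr.mul hθ.sin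
  have h1 : HasFDerivAt (fun q : Esp (n+1) => (F n ε q).1)
      (ContinuousLinearMap.pi (Phi1 n ε p)) p := by
    apply hasFDerivAt_pi.2
    intro i
    by_cases hi : i = Fin.last n
    · subst hi
      simp only [F, Phi1, if_pos rfl]
      exact hX
    · simp only [F, Phi1, if_neg hi]
      exact ((ContinuousLinearMap.proj i).comp
        (ContinuousLinearMap.fst ℝ (Fin (n+1) → ℝ) (Fin (n+1) → ℝ))).hasFDerivAt
  have h2 : HasFDerivAt (fun q : Esp (n+1) => (F n ε q).2)
      (ContinuousLinearMap.pi (Phi2 n ε p)) p := by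
    apply hasFDerivAt_pi.2
    intro i
    by_cases hi : i = Fin.last n
    · subst hi
      simp only [F, Phi2, if_pos rfl]
      exact hY
    · simp only [F, Phi2, if_neg hi]
      exact ((ContinuousLinearMap.proj i).comp
        (ContinuousLinearMap.snd ℝ (Fin (n+1) → ℝ) (Fin (n+1) → ℝ))).hasFDerivAt
  exact h1.prodMk h2

theorem omegaL (ε : ℝ) (p : Esp (n+1)) (hp : 0 < p.1 (Fin.last n) + ε) (v w : Esp (n+1)) :
    omega0 (L n ε p v) (L n ε p w) = omega0 v w := by
  have hspos : 0 < (p.1 (Fin.last n) + ε) * Real.pi⁻¹ :=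
    mul_pos hp (inv_pos.2 Real.pi_pos)
  have hrne : Real.sqrt ((p.1 (Fin.last n) + ε) * Real.pi⁻¹) ≠ 0 :=
    ne_of_gt (Real.sqrt_pos.2 hspos)
  have hne : ∀ i : Fin n, (i.castSucc ≠ Fin.last n) := fun i => (Fin.castSucc_lt_last i).ne
  simp only [omega0, L, Phi1, Phi2, XD, YD, ContinuousLinearMap.prod_apply,
    ContinuousLinearMap.pi_apply, ContinuousLinearMap.add_apply,
    ContinuousLinearMap.coe_smul', Pi.smul_apply, ContinuousLinearMap.coe_comp',
    Function.comp_apply, ContinuousLinearMap.proj_apply, ContinuousLinearMap.coe_fst',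
    ContinuousLinearMap.coe_snd', smul_eq_mul, U, V]
  rw [Fin.sum_univ_castSucc, Fin.sum_univ_castSucc]
  simp only [if_neg (hne _), if_pos rfl, ite_true, ContinuousLinearMap.add_apply,
    ContinuousLinearMap.coe_smul', Pi.smul_apply, ContinuousLinearMap.coe_comp',
    Function.comp_apply, ContinuousLinearMap.proj_apply, ContinuousLinearMap.coe_fst',
    ContinuousLinearMap.coe_snd', smul_eq_mul]
  congr 1
  have hπ := Real.pi_ne_zero
  have h := Real.sin_sq_add_cos_sq (2 * Real.pi * p.2 (Fin.last n))
  set r := Real.sqrt ((p.1 (Fin.last n) + ε) * Real.pi⁻¹)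
  field_simp
  linear_combination (4 * r ^ 2 * Real.pi ^ 2 *
    (v.1 (Fin.last n) * w.2 (Fin.last n) - v.2 (Fin.last n) * w.1 (Fin.last n))) * h

/-- Points of the interior of the trapezoid have `v < 1`. -/
lemma v_lt_one {a : ℝ} {p : Esp (n+1)} (hp : p ∈ interior (trapezoid n a)) :
    p.2 (Fin.last n) < 1 := by
  classical
  set φ : ℝ → Esp (n+1) := fun t => (p.1, Function.update p.2 (Fin.last n) t) with hφdef
  have hφ : Continuous φ :=
    continuous_const.prodMk (continuous_const.update (Fin.last n) continuous_id)
  have hφv : φ (p.2 (Fin.last n)) = p := by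
    simp [φ, Function.update_eq_self]
  have hmem : φ ⁻¹' interior (trapezoid n a) ∈ nhds (p.2 (Fin.last n)) :=
    hφ.continuousAt.preimage_mem_nhds (by rw [hφv]; exact isOpen_interior.mem_nhds hp)
  obtain ⟨δ, hδ, hsub⟩ := Metric.mem_nhds_iff.1 hmem
  have hball : p.2 (Fin.last n) + δ / 2 ∈ Metric.ball (p.2 (Fin.last n)) δ := by
    simp only [Metric.mem_ball, Real.dist_eq, add_sub_cancel_left]
    rw [abs_of_pos (by linarith)]
    linarith
  have ht := interior_subset (hsub hball)
  have hle : (φ (p.2 (Fin.last n) + δ / 2)).2 (Fin.last n) ≤ 1 := ht.2.1.2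
  simp only [φ, Function.update_self] at hle
  linarith

/-- Injectivity of the polar-coordinates type map on a fundamental domain. -/
lemma polar_inj {u1 u2 v1 v2 ε : ℝ} (hu1 : 0 < u1 + ε) (hu2 : 0 < u2 + ε)
    (hv1 : 0 ≤ v1) (hv1' : v1 < 1) (hv2 : 0 ≤ v2) (hv2' : v2 < 1)
    (hX : Real.sqrt ((u1 + ε) * Real.pi⁻¹) * Real.cos (2 * Real.pi * v1)
        = Real.sqrt ((u2 + ε) * Real.pi⁻¹) * Real.cos (2 * Real.pi * v2))
    (hY : Real.sqrt ((u1 + ε) * Real.pi⁻¹) * Real.sin (2 * Real.pi * v1)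
        = Real.sqrt ((u2 + ε) * Real.pi⁻¹) * Real.sin (2 * Real.pi * v2)) :
    u1 = u2 ∧ v1 = v2 := by
  have hπ := Real.pi_pos
  have hs1 : 0 < (u1 + ε) * Real.pi⁻¹ := mul_pos hu1 (inv_pos.2 hπ)
  have hs2 : 0 < (u2 + ε) * Real.pi⁻¹ := mul_pos hu2 (inv_pos.2 hπ)
  have hsq1 : Real.sqrt ((u1 + ε) * Real.pi⁻¹) ^ 2 = (u1 + ε) * Real.pi⁻¹ :=
    Real.sq_sqrt hs1.le
  have hsq2 : Real.sqrt ((u2 + ε) * Real.pi⁻¹) ^ 2 = (u2 + ε) * Real.pi⁻¹ :=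
    Real.sq_sqrt hs2.le
  have e1 := Real.sin_sq_add_cos_sq (2 * Real.pi * v1)
  have e2 := Real.sin_sq_add_cos_sq (2 * Real.pi * v2)
  have key : Real.sqrt ((u1 + ε) * Real.pi⁻¹) ^ 2 = Real.sqrt ((u2 + ε) * Real.pi⁻¹) ^ 2 := by
    linear_combination
      (Real.sqrt ((u1 + ε) * Real.pi⁻¹) * Real.cos (2 * Real.pi * v1) +
        Real.sqrt ((u2 + ε) * Real.pi⁻¹) * Real.cos (2 * Real.pi * v2)) * hX +
      (Real.sqrt ((u1 + ε) * Real.pi⁻¹) * Real.sin (2 * Real.pi * v1) +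
        Real.sqrt ((u2 + ε) * Real.pi⁻¹) * Real.sin (2 * Real.pi * v2)) * hY -
      Real.sqrt ((u1 + ε) * Real.pi⁻¹) ^ 2 * e1 +
      Real.sqrt ((u2 + ε) * Real.pi⁻¹) ^ 2 * e2
  have hss : (u1 + ε) * Real.pi⁻¹ = (u2 + ε) * Real.pi⁻¹ := by
    rw [← hsq1, ← hsq2]; exact key
  have hu : u1 = u2 := by
    have := mul_right_cancel₀ (inv_ne_zero Real.pi_ne_zero) hss
    linarith
  subst hu
  have hrpos : 0 < Real.sqrt ((u1 + ε) * Real.pi⁻¹) := Real.sqrt_pos.2 hs1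
  have hcos : Real.cos (2 * Real.pi * v1) = Real.cos (2 * Real.pi * v2) :=
    mul_left_cancel₀ (ne_of_gt hrpos) hX
  have hsin : Real.sin (2 * Real.pi * v1) = Real.sin (2 * Real.pi * v2) :=
    mul_left_cancel₀ (ne_of_gt hrpos) hY
  have hcd : Real.cos (2 * Real.pi * v1 - 2 * Real.pi * v2) = 1 := by
    rw [Real.cos_sub, hcos, hsin]
    linear_combination e2
  have hb1 : -(2 * Real.pi) < 2 * Real.pi * v1 - 2 * Real.pi * v2 := by nlinarith
  have hb2 : 2 * Real.pi * v1 - 2 * Real.pi * v2 < 2 * Real.pi := by nlinarith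
  have h0 := (Real.cos_eq_one_iff_of_lt_of_lt hb1 hb2).1 hcd
  refine ⟨rfl, ?_⟩
  have h2π : (2 : ℝ) * Real.pi ≠ 0 := by positivity
  have : 2 * Real.pi * v1 = 2 * Real.pi * v2 := by linarith
  exact mul_left_cancel₀ h2π this

end S13

/-- (Lemma 3.5 (ii) of the paper.)  For every `a > 0` and `ε > 0` the
interior of the trapezoid `T^{2n+2}(a)` embeds symplectically into the ball
`B^{2n+2}(a+ε)`. -/
theorem statement13 (n : ℕ) (a ε : ℝ) (ha : 0 < a) (hε : 0 < ε) :
    ∃ f : Esp (n+1) → Esp (n+1),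
      IsSymplecticEmbeddingOn f (interior (trapezoid n a)) ∧
      f '' interior (trapezoid n a) ⊆ closedBallCap (n+1) (a + ε) := by
  refine ⟨S13.F n ε, ⟨?_, ?_⟩, ?_⟩
  · -- injectivity
    intro p hp q hq h
    have hTp := interior_subset hp
    have hTq := interior_subset hq
    have hup : 0 < p.1 (Fin.last n) + ε := by have := hTp.1.1; linarith
    have huq : 0 < q.1 (Fin.last n) + ε := by have := hTq.1.1; linarith
    have hX : Real.sqrt ((p.1 (Fin.last n) + ε) * Real.pi⁻¹) *
        Real.cos (2 * Real.pi * p.2 (Fin.last n)) =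
        Real.sqrt ((q.1 (Fin.last n) + ε) * Real.pi⁻¹) *
        Real.cos (2 * Real.pi * q.2 (Fin.last n)) := by
      rw [← S13.F_fst_last ε p, h, S13.F_fst_last]
    have hY : Real.sqrt ((p.1 (Fin.last n) + ε) * Real.pi⁻¹) *
        Real.sin (2 * Real.pi * p.2 (Fin.last n)) =
        Real.sqrt ((q.1 (Fin.last n) + ε) * Real.pi⁻¹) *
        Real.sin (2 * Real.pi * q.2 (Fin.last n)) := by
      rw [← S13.F_snd_last ε p, h, S13.F_snd_last]
    obtain ⟨hu, hv⟩ := S13.polar_inj hup huq hTp.2.1.1 (S13.v_lt_one hp)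
      hTq.2.1.1 (S13.v_lt_one hq) hX hY
    have h1 : p.1 = q.1 := by
      funext i
      by_cases hi : i = Fin.last n
      · subst hi; exact hu
      · rw [← S13.F_fst_ne ε p hi, h, S13.F_fst_ne ε q hi]
    have h2 : p.2 = q.2 := by
      funext i
      by_cases hi : i = Fin.last n
      · subst hi; exact hv
      · rw [← S13.F_snd_ne ε p hi, h, S13.F_snd_ne ε q hi]
    exact Prod.ext h1 h2
  · -- symplectic
    intro p hp
    have hup : 0 < p.1 (Fin.last n) + ε := by
      have := (interior_subset hp).1.1; linarith
    have hF := S13.hasF ε p hup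
    exact ⟨hF.differentiableAt, by rw [hF.fderiv]; exact S13.omegaL ε p hup⟩
  · -- image in the ball
    rintro _ ⟨p, hp, rfl⟩
    have hT := interior_subset hp
    have hu0 : 0 ≤ p.1 (Fin.last n) := hT.1.1
    have hπ := Real.pi_pos
    have hs : (0:ℝ) ≤ (p.1 (Fin.last n) + ε) * Real.pi⁻¹ := by positivity
    have hne : ∀ i : Fin n, (i.castSucc ≠ Fin.last n) := fun i => (Fin.castSucc_lt_last i).ne
    simp only [closedBallCap, mem_setOf_eq, S13.F]
    rw [Fin.sum_univ_castSucc]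
    simp only [if_neg (hne _), if_pos rfl, if_true, eq_self_iff_true]
    have hlast : (Real.sqrt ((p.1 (Fin.last n) + ε) * Real.pi⁻¹) *
          Real.cos (2 * Real.pi * p.2 (Fin.last n))) ^ 2 +
        (Real.sqrt ((p.1 (Fin.last n) + ε) * Real.pi⁻¹) *
          Real.sin (2 * Real.pi * p.2 (Fin.last n))) ^ 2 =
        (p.1 (Fin.last n) + ε) * Real.pi⁻¹ := by
      have e := Real.sin_sq_add_cos_sq (2 * Real.pi * p.2 (Fin.last n))
      have hsq := Real.sq_sqrt hs
      linear_combination Real.sqrt ((p.1 (Fin.last n) + ε) * Real.pi⁻¹) ^ 2 * e + hsq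
    rw [hlast, mul_add]
    have hcancel : Real.pi * ((p.1 (Fin.last n) + ε) * Real.pi⁻¹) = p.1 (Fin.last n) + ε := by
      field_simp
    rw [hcancel]
    have h3 := hT.2.2
    linarith
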